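/- Let G = (V,E) be a finite graph that is regular of degree d ≥ 1 and whose adjacency matrix has smallest eigenvalue −λ, let N = |V|, and let m ∈ ℕ. Set σ = (ln(d+1)+1)/(d+λ) and α = λ/(d+λ). Then the number i(G,m) of stable sets of G of cardinality at most m satisfies i(G,m) ≤ (Σ_{i=0}^{⌈σN⌉} C(N,i)) · (Σ_{j=0}^{m} C(⌊αN⌋, j)). -/

import Mathlib

/-!
Kleitman–Winston containers. Given a stable set `S`, run a greedy procedure on a candidate set
`C`, initially `V`: take a vertex `v` of maximum degree in `G[C]`; if `v ∈ S`, record `v` and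
delete `v` and its neighbours from `C`, otherwise delete `v` alone; stop once `|C| ≤ ⌊αN⌋` or
`⌈σN⌉` vertices have been recorded. The procedure only asks whether `v` belongs to the recorded
set `A`, so the final `C` is a function of `A`, and it contains `S \ A`.

Since the adjacency eigenvalues are at least `-λ`, the quadratic form at `1_C - (|C|/N) 1` shows
that `G[C]` has average degree at least `(d+λ)|C|/N - λ`. Each recording step therefore
multiplies `|C| - (λ-1)N/(d+λ)` by at most `1 - (d+λ)/N ≤ exp(-(d+λ)/N)`, and `⌈σN⌉` steps
bring `|C|` below `αN + 1`. So `S` is determined by `A`, of size at most `⌈σN⌉`, and by `S \ A`,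
a set of at most `m` elements of a set of size at most `⌊αN⌋`.
-/

/-- `−λ` is the smallest eigenvalue of the adjacency matrix of `G`. -/
def SmallestAdjEigenvalue {V : Type*} [Fintype V] [DecidableEq V]
    (G : SimpleGraph V) [DecidableRel G.Adj] (lam : ℝ) : Prop :=
  Module.End.HasEigenvalue (Matrix.toLin' (G.adjMatrix ℝ)) (-lam) ∧
    ∀ μ : ℝ, Module.End.HasEigenvalue (Matrix.toLin' (G.adjMatrix ℝ)) μ → -lam ≤ μ

open Finset Matrix

theorem Matrix.IsHermitian.mul_dotProduct_self_le {n : Type*} [Fintype n] [DecidableEq n]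
    {A : Matrix n n ℝ} (hA : A.IsHermitian) {c : ℝ}
    (hc : ∀ μ : ℝ, Module.End.HasEigenvalue (Matrix.toLin' A) μ → c ≤ μ) (x : n → ℝ) :
    c * (x ⬝ᵥ x) ≤ x ⬝ᵥ (A *ᵥ x) := by
  have hpsd : (A - algebraMap ℝ _ c).PosSemidef := by
    refine posSemidef_iff_isHermitian_and_spectrum_nonneg.2
      ⟨hA.sub (by simp [algebraMap_eq_diagonal]), ?_⟩
    rw [← spectrum.sub_singleton_eq, ← Matrix.spectrum_toLin']
    rintro _ ⟨μ, hμ, _, rfl, rfl⟩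
    exact sub_nonneg.2 (hc μ (Module.End.hasEigenvalue_iff_mem_spectrum.2 hμ))
  simpa [sub_mulVec, Algebra.algebraMap_eq_smul_one, smul_mulVec, dotProduct_sub] using
    hpsd.dotProduct_mulVec_nonneg x

theorem Finset.card_filter_powerset_card_le {α : Type*} (s : Finset α) (k : ℕ) :
    #{A ∈ s.powerset | #A ≤ k} = ∑ i ∈ range (k + 1), (#s).choose i := by
  rw [card_eq_sum_card_fiberwise (f := card) (t := range (k + 1))
    fun A hA => mem_range.2 (Nat.lt_succ_of_le (mem_filter.1 hA).2)]
  refine sum_congr rfl fun i hi => ?_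
  rw [← card_powersetCard, powersetCard_eq_filter, filter_filter]
  congr 1
  exact filter_congr fun A _ => by
    simp only [and_iff_right_iff_imp]; rintro rfl; exact Nat.lt_succ_iff.1 (mem_range.1 hi)

theorem Finset.card_le_of_fingerprint {α : Type*} [Fintype α] [DecidableEq α]
    {𝒮 : Finset (Finset α)} {q m R : ℕ} (D : Finset α → Finset α) (hD : ∀ A, #(D A) ≤ R)
    (hm : ∀ S ∈ 𝒮, #S ≤ m) (hfp : ∀ S ∈ 𝒮, ∃ A ⊆ S, #A ≤ q ∧ S ⊆ A ∪ D A) :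
    #𝒮 ≤ (∑ i ∈ range (q + 1), (Fintype.card α).choose i) *
      ∑ j ∈ range (m + 1), R.choose j := by
  choose! f hfS hfq hcov using hfp
  have hfiber : ∀ A ∈ 𝒮.image f, #{S ∈ 𝒮 | f S = A} ≤ ∑ j ∈ range (m + 1), R.choose j := by
    intro A _
    calc #{S ∈ 𝒮 | f S = A} ≤ #{B ∈ (D A).powerset | #B ≤ m} := by
          refine card_le_card_of_injOn (· \ A) (fun S hS => ?_) fun S₁ hS₁ S₂ hS₂ h => ?_
          · obtain ⟨hS𝒮, rfl⟩ := mem_filter.1 hS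
            rw [coe_filter]
            exact ⟨mem_powerset.2 (sdiff_le_iff.2 (hcov S hS𝒮)),
              (card_le_card sdiff_subset).trans (hm S hS𝒮)⟩
          · obtain ⟨hS₁𝒮, rfl⟩ := mem_filter.1 hS₁
            obtain ⟨hS₂𝒮, h₂⟩ := mem_filter.1 hS₂
            rw [← sdiff_union_of_subset (hfS S₁ hS₁𝒮), ← sdiff_union_of_subset (hfS S₂ hS₂𝒮), h₂]
            exact congrArg (· ∪ f S₁) h
      _ = ∑ j ∈ range (m + 1), (#(D A)).choose j := card_filter_powerset_card_le _ _
      _ ≤ ∑ j ∈ range (m + 1), R.choose j := sum_le_sum fun j _ => Nat.choose_le_choose j (hD A)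
  calc #𝒮 ≤ (∑ j ∈ range (m + 1), R.choose j) * #(𝒮.image f) := card_le_mul_card_image _ _ hfiber
    _ ≤ (∑ j ∈ range (m + 1), R.choose j) * #{A ∈ univ.powerset | #A ≤ q} := by
        refine Nat.mul_le_mul_left _ (card_le_card fun A hA => ?_)
        obtain ⟨S, hS, rfl⟩ := mem_image.1 hA
        exact mem_filter.2 ⟨mem_powerset.2 (subset_univ _), hfq S hS⟩
    _ = _ := by rw [card_filter_powerset_card_le, card_univ, mul_comm]

theorem Set.ncard_setOf_eq_card_filter {α : Type*} [Fintype α] (P : Set α → Prop)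
    [DecidablePred fun S : Finset α => P S] :
    {S : Set α | P S}.ncard = #{S : Finset α | P S} := by
  rw [← Set.ncard_coe_finset, ← Set.ncard_image_of_injective _ Finset.coe_injective]
  congr 1
  ext S
  simp only [coe_filter, Set.mem_image]
  exact ⟨fun h => ⟨S.toFinite.toFinset, by simpa using h, by simp⟩,
    by rintro ⟨T, hT, rfl⟩; simpa using hT⟩

lemma exp_neg_mul_sub_add_lt {a b d N q : ℝ} (ha : 0 < a) (hd : 0 ≤ d) (hN : a * N = d + b)
    (hq : Real.log (d + 1) + 1 ≤ a * q) :
    Real.exp (-(a * q)) * (N - (b - 1) / a) + (b - 1) / a < b / a := by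
  have hd1 : 0 < d + 1 := by linarith
  have hexp : Real.exp (-(a * q)) ≤ Real.exp (-1) / (d + 1) := by
    rw [div_eq_mul_inv, ← Real.exp_log hd1, ← Real.exp_neg, ← Real.exp_add]
    exact Real.exp_le_exp.2 (by linarith)
  calc Real.exp (-(a * q)) * (N - (b - 1) / a) + (b - 1) / a
      ≤ Real.exp (-1) / (d + 1) * ((d + 1) / a) + (b - 1) / a := by
        rw [show N - (b - 1) / a = (d + 1) / a by field_simp; linarith]
        gcongr
    _ = Real.exp (-1) / a + (b - 1) / a := by field_simp
    _ < 1 / a + (b - 1) / a := by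
        gcongr; exact Real.exp_lt_one_iff.2 (by norm_num)
    _ = b / a := by ring

namespace SimpleGraph

variable {V : Type*} [Fintype V] [DecidableEq V] {G : SimpleGraph V} [DecidableRel G.Adj]

theorem IsRegularOfDegree.sum_card_neighborFinset_inter_ge {d : ℕ}
    (hreg : G.IsRegularOfDegree d) {lam : ℝ}
    (hlam : ∀ μ : ℝ, Module.End.HasEigenvalue (toLin' (G.adjMatrix ℝ)) μ → -lam ≤ μ)
    (C : Finset V) :
    (d + lam) / Fintype.card V * #C ^ 2 - lam * #C ≤ ∑ v ∈ C, (#(G.neighborFinset v ∩ C) : ℝ) := by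
  set N : ℝ := (Fintype.card V : ℝ)
  set c : ℝ := (#C : ℝ)
  set t := c / N
  set x : V → ℝ := fun u => if u ∈ C then 1 else 0
  set o : V → ℝ := fun _ => 1
  have htN : t * N = c := by
    rcases (Fintype.card V).eq_zero_or_pos with hN | hN
    · have : #C = 0 := Nat.eq_zero_of_le_zero (hN ▸ card_le_univ C)
      simp [t, c, N, this]
    · exact div_mul_cancel₀ c (by positivity)
  have hAo : G.adjMatrix ℝ *ᵥ o = (d : ℝ) • o := by
    ext v; simpa [o] using adjMatrix_mulVec_const_apply_of_regular (a := (1 : ℝ)) hreg (v := v)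
  have hsymm : o ⬝ᵥ (G.adjMatrix ℝ *ᵥ x) = x ⬝ᵥ (G.adjMatrix ℝ *ᵥ o) := by
    rw [← dotProduct_transpose_mulVec, transpose_adjMatrix]
  have hxx : x ⬝ᵥ x = c := by simp [x, dotProduct, c]
  have hxo : x ⬝ᵥ o = c := by simp [x, o, dotProduct, c]
  have hoo : o ⬝ᵥ o = N := by simp [o, dotProduct, N]
  have hxAx : x ⬝ᵥ (G.adjMatrix ℝ *ᵥ x) = ∑ v ∈ C, (#(G.neighborFinset v ∩ C) : ℝ) := by
    simp [dotProduct, x]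
  have key := (G.isHermitian_adjMatrix ℝ).mul_dotProduct_self_le hlam (x - t • o)
  simp only [mulVec_sub, mulVec_smul, dotProduct_sub, sub_dotProduct, dotProduct_smul,
    smul_dotProduct, hAo, hsymm, hxx, hxo, hoo, hxAx, dotProduct_comm o x, smul_eq_mul] at key
  rw [htN, sub_self] at key
  rw [show (d + lam) / N * c ^ 2 = (d + lam) * t * c by simp only [t]; ring]
  linarith

theorem IsRegularOfDegree.exists_le_card_neighborFinset_inter {d : ℕ}
    (hreg : G.IsRegularOfDegree d) {lam : ℝ}
    (hlam : ∀ μ : ℝ, Module.End.HasEigenvalue (toLin' (G.adjMatrix ℝ)) μ → -lam ≤ μ)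
    {C : Finset V} (hC : C.Nonempty) :
    ∃ v ∈ C, (d + lam) / Fintype.card V * #C - lam ≤ #(G.neighborFinset v ∩ C) := by
  refine exists_le_of_sum_le hC ?_
  rw [sum_const, nsmul_eq_mul]
  linear_combination hreg.sum_card_neighborFinset_inter_ge hlam C

theorem nonneg_of_forall_neg_le_eigenvalue [Nonempty V] {lam : ℝ}
    (hlam : ∀ μ : ℝ, Module.End.HasEigenvalue (toLin' (G.adjMatrix ℝ)) μ → -lam ≤ μ) :
    0 ≤ lam := by
  obtain ⟨v⟩ := ‹Nonempty V›
  simpa using (G.isHermitian_adjMatrix ℝ).mul_dotProduct_self_le hlam (Pi.single v 1)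

variable (G)

noncomputable def maxDegreeVertex (C : Finset V) (hC : C.Nonempty) : V :=
  (C.exists_max_image (fun v => #(G.neighborFinset v ∩ C)) hC).choose

lemma maxDegreeVertex_mem {C : Finset V} (hC : C.Nonempty) : G.maxDegreeVertex C hC ∈ C :=
  (C.exists_max_image (fun v => #(G.neighborFinset v ∩ C)) hC).choose_spec.1

lemma card_neighborFinset_inter_le_maxDegreeVertex {C : Finset V} (hC : C.Nonempty) {w : V}
    (hw : w ∈ C) :
    #(G.neighborFinset w ∩ C) ≤ #(G.neighborFinset (G.maxDegreeVertex C hC) ∩ C) :=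
  (C.exists_max_image (fun v => #(G.neighborFinset v ∩ C)) hC).choose_spec.2 w hw

lemma card_sdiff_insert_neighborFinset_lt {C : Finset V} {v : V} (hv : v ∈ C) :
    #(C \ insert v (G.neighborFinset v)) < #C :=
  card_lt_card (ssubset_iff_of_subset sdiff_subset |>.2 ⟨v, hv, by simp⟩)

noncomputable def container (R : ℕ) (A : Finset V) (q : ℕ) (C : Finset V) : Finset V :=
  if h : #C ≤ R ∨ q = 0 then C
  else
    let v := G.maxDegreeVertex C (card_pos.1 (by omega))
    if v ∈ A then container R A (q - 1) (C \ insert v (G.neighborFinset v))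
    else container R A q (C.erase v)
termination_by #C
decreasing_by
  · exact G.card_sdiff_insert_neighborFinset_lt (G.maxDegreeVertex_mem _)
  · exact card_erase_lt_of_mem (G.maxDegreeVertex_mem _)

variable {G} {R q : ℕ} {A C : Finset V}

lemma container_of_stop (h : #C ≤ R ∨ q = 0) : G.container R A q C = C := by
  rw [container, dif_pos h]

lemma container_of_mem {hC : C.Nonempty} (h : ¬(#C ≤ R ∨ q = 0))
    (hv : G.maxDegreeVertex C hC ∈ A) :
    G.container R A q C = G.container R A (q - 1)
      (C \ insert (G.maxDegreeVertex C hC) (G.neighborFinset (G.maxDegreeVertex C hC))) := by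
  rw [container, dif_neg h]
  exact if_pos hv

lemma container_of_notMem {hC : C.Nonempty} (h : ¬(#C ≤ R ∨ q = 0))
    (hv : G.maxDegreeVertex C hC ∉ A) :
    G.container R A q C = G.container R A q (C.erase (G.maxDegreeVertex C hC)) := by
  rw [container, dif_neg h]
  exact if_neg hv

lemma container_congr {A' : Finset V} (hA : ∀ w ∈ C, w ∈ A ↔ w ∈ A') :
    G.container R A q C = G.container R A' q C := by
  induction q, C using container.induct G R A with
  | case1 q C h => rw [container_of_stop h, container_of_stop h]
  | case2 q C h v hv ih =>
    rw [container_of_mem h hv, container_of_mem h ((hA _ (G.maxDegreeVertex_mem _)).1 hv),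
      ih fun w hw => hA w (sdiff_subset hw)]
  | case3 q C h v hv ih =>
    rw [container_of_notMem h hv,
      container_of_notMem h fun h' => hv ((hA _ (G.maxDegreeVertex_mem _)).2 h'),
      ih fun w hw => hA w (erase_subset _ _ hw)]

theorem exists_fingerprint {S : Finset V} (hS : G.IsIndepSet (S : Set V)) (q : ℕ)
    (C : Finset V) : ∃ A ⊆ S, #A ≤ q ∧ S ∩ C ⊆ A ∪ G.container R A q C := by
  induction q, C using container.induct G R S with
  | case1 q C h => exact ⟨∅, empty_subset _, by simp, by simp [container_of_stop h]⟩
  | case2 q C h v hv ih =>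
    obtain ⟨A, hAS, hAq, hcov⟩ := ih
    refine ⟨insert v A, insert_subset hv hAS, (card_insert_le _ _).trans (by omega), ?_⟩
    rw [container_of_mem h (mem_insert_self v A), container_congr (A' := A) fun w hw => by
      rw [mem_insert, or_iff_right (ne_of_mem_of_not_mem hw (by simp [v]))]]
    intro w hw
    obtain ⟨hwS, hwC⟩ := mem_inter.1 hw
    by_cases hwv : w = v
    · simp [hwv]
    · have hwC' : w ∈ S ∩ (C \ insert v (G.neighborFinset v)) := by
        simp only [mem_inter, mem_sdiff, mem_insert, mem_neighborFinset, not_or]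
        exact ⟨hwS, hwC, hwv, fun hvw => hS hv hwS (Ne.symm hwv) hvw⟩
      simpa [hwv] using hcov hwC'
  | case3 q C h v hv ih =>
    obtain ⟨A, hAS, hAq, hcov⟩ := ih
    refine ⟨A, hAS, hAq, ?_⟩
    rw [container_of_notMem h fun hvA => hv (hAS hvA)]
    intro w hw
    exact hcov (mem_inter.2 ⟨(mem_inter.1 hw).1, mem_erase.2
      ⟨fun hwv => hv (hwv ▸ (mem_inter.1 hw).1), (mem_inter.1 hw).2⟩⟩)

section SizeBound

variable {a b : ℝ}

lemma card_sdiff_insert_neighborFinset_add {v : V} (hv : v ∈ C) :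
    #(C \ insert v (G.neighborFinset v)) + (#(G.neighborFinset v ∩ C) + 1) = #C := by
  rw [← card_sdiff_add_card_inter C (insert v (G.neighborFinset v)), inter_insert_of_mem hv,
    card_insert_of_notMem (by simp), inter_comm]

lemma card_sdiff_insert_neighborFinset_sub_le (ha : 0 < a) {v : V} (hv : v ∈ C)
    (hdeg : a * #C - b ≤ #(G.neighborFinset v ∩ C)) (hC : b / a < #C) :
    (#(C \ insert v (G.neighborFinset v)) : ℝ) - (b - 1) / a ≤
      Real.exp (-a) * (#C - (b - 1) / a) := by
  have hcard : (#(C \ insert v (G.neighborFinset v)) : ℝ) + (#(G.neighborFinset v ∩ C) + 1)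
      = #C := by exact_mod_cast G.card_sdiff_insert_neighborFinset_add hv
  have hpos : 0 ≤ (#C : ℝ) - (b - 1) / a := by
    have : (b - 1) / a ≤ b / a := div_le_div_of_nonneg_right (by linarith) ha.le
    linarith
  -- the new size is at most `(1 - a) #C + b - 1`, and `(b - 1) / a` is the fixed point of that map
  calc (#(C \ insert v (G.neighborFinset v)) : ℝ) - (b - 1) / a
      ≤ (1 - a) * (#C - (b - 1) / a) := by
        have : (1 - a) * ((b - 1) / a) = (b - 1) / a - (b - 1) := by field_simp
        linarith
    _ ≤ Real.exp (-a) * (#C - (b - 1) / a) :=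
        mul_le_mul_of_nonneg_right (by linarith [Real.add_one_le_exp (-a)]) hpos

lemma le_card_neighborFinset_maxDegreeVertex {x : ℝ} (hC : C.Nonempty)
    (h : ∃ v ∈ C, x ≤ #(G.neighborFinset v ∩ C)) :
    x ≤ #(G.neighborFinset (G.maxDegreeVertex C hC) ∩ C) := by
  obtain ⟨v, hv, hx⟩ := h
  exact hx.trans (by exact_mod_cast G.card_neighborFinset_inter_le_maxDegreeVertex hC hv)

theorem card_container_le_or (ha : 0 < a) (hR : b / a < R + 1)
    (hdeg : ∀ C : Finset V, C.Nonempty → ∃ v ∈ C, a * #C - b ≤ #(G.neighborFinset v ∩ C))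
    (A : Finset V) (q : ℕ) (C : Finset V) :
    #(G.container R A q C) ≤ R ∨
      (#(G.container R A q C) : ℝ) - (b - 1) / a ≤ Real.exp (-(a * q)) * (#C - (b - 1) / a) := by
  induction q, C using container.induct G R A with
  | case1 q C h =>
    rw [container_of_stop h]
    rcases h with h | rfl
    · exact .inl h
    · simp
  | case2 q C h v hv ih =>
    rw [container_of_mem h hv]
    refine ih.imp_right fun ih => ih.trans ?_
    have hC : b / a < #C := hR.trans_le (by exact_mod_cast (not_le.1 (not_or.1 h).1))
    have hq : ((q - 1 : ℕ) : ℝ) = q - 1 := by rw [Nat.cast_sub (by omega)]; simp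
    calc Real.exp (-(a * (q - 1 : ℕ))) * (#(C \ insert v (G.neighborFinset v)) - (b - 1) / a)
        ≤ Real.exp (-(a * (q - 1 : ℕ))) * (Real.exp (-a) * (#C - (b - 1) / a)) :=
          mul_le_mul_of_nonneg_left (card_sdiff_insert_neighborFinset_sub_le ha
            (G.maxDegreeVertex_mem _) (le_card_neighborFinset_maxDegreeVertex _
              (hdeg C (card_pos.1 (by omega)))) hC) (Real.exp_pos _).le
      _ = Real.exp (-(a * q)) * (#C - (b - 1) / a) := by
          rw [← mul_assoc, ← Real.exp_add, hq]; ring_nf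
  | case3 q C h v hv ih =>
    rw [container_of_notMem h hv]
    refine ih.imp_right fun ih => ih.trans (mul_le_mul_of_nonneg_left ?_ (Real.exp_pos _).le)
    have : #(C.erase v) ≤ #C := card_erase_le
    gcongr

end SizeBound

theorem IsRegularOfDegree.card_container_le [Nonempty V] {d : ℕ} (hd : 1 ≤ d)
    (hreg : G.IsRegularOfDegree d) {lam : ℝ}
    (hlam : ∀ μ : ℝ, Module.End.HasEigenvalue (toLin' (G.adjMatrix ℝ)) μ → -lam ≤ μ)
    (A : Finset V) :
    #(G.container ⌊lam / (d + lam) * Fintype.card V⌋₊ A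
        ⌈(Real.log (d + 1) + 1) / (d + lam) * Fintype.card V⌉₊ univ) ≤
      ⌊lam / (d + lam) * Fintype.card V⌋₊ := by
  set N : ℝ := (Fintype.card V : ℝ)
  set R := ⌊lam / (d + lam) * N⌋₊
  set q := ⌈(Real.log (d + 1) + 1) / (d + lam) * N⌉₊
  have hN : 0 < N := by simp [N, Fintype.card_pos]
  have hdlam : 0 < (d : ℝ) + lam := by
    have : (1 : ℝ) ≤ d := by exact_mod_cast hd
    linarith [G.nonneg_of_forall_neg_le_eigenvalue hlam]
  set a : ℝ := (d + lam) / N with ha_def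
  have ha : 0 < a := by positivity
  have hR : lam / a < R + 1 := by
    rw [show lam / a = lam / (d + lam) * N by rw [ha_def]; field_simp]
    exact Nat.lt_floor_add_one _
  have hq : Real.log (d + 1) + 1 ≤ a * q := by
    calc Real.log (d + 1) + 1 = a * ((Real.log (d + 1) + 1) / (d + lam) * N) := by
          rw [ha_def]; field_simp
      _ ≤ a * q := by gcongr; exact Nat.le_ceil _
  refine (G.card_container_le_or ha hR (fun C hC => hreg.exists_le_card_neighborFinset_inter
    hlam hC) A q univ).elim id fun h => Nat.lt_succ_iff.1 ?_
  have := exp_neg_mul_sub_add_lt (b := lam) (N := N) ha (Nat.cast_nonneg d)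
    (by rw [ha_def]; field_simp) hq
  rw [card_univ] at h
  have hlt : (#(G.container R A q univ) : ℝ) < R + 1 := by linarith
  exact_mod_cast hlt

end SimpleGraph

/-- For a `d`-regular graph `G` (`d ≥ 1`) on `N` vertices with smallest
adjacency eigenvalue `−λ`, the number `i(G,m)` of stable sets of cardinality at most `m`
satisfies `i(G,m) ≤ (Σ_{i=0}^{⌈σN⌉} C(N,i)) · (Σ_{j=0}^{m} C(⌊αN⌋,j))`, where
`σ = (ln(d+1)+1)/(d+λ)` and `α = λ/(d+λ)`. -/
theorem count_small_stable_sets {V : Type*} [Fintype V] [DecidableEq V]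
    (G : SimpleGraph V) [DecidableRel G.Adj] (d : ℕ) (hd : 1 ≤ d)
    (hreg : G.IsRegularOfDegree d) (lam : ℝ) (hlam : SmallestAdjEigenvalue G lam)
    (m : ℕ) :
    (({S : Set V | S.Pairwise (fun u v => ¬ G.Adj u v) ∧ S.ncard ≤ m}).ncard : ℝ) ≤
      (∑ i ∈ Finset.range
          (⌈(Real.log (d + 1) + 1) / (d + lam) * (Fintype.card V : ℝ)⌉₊ + 1),
          ((Fintype.card V).choose i : ℝ)) *
        (∑ j ∈ Finset.range (m + 1),
          ((⌊lam / (d + lam) * (Fintype.card V : ℝ)⌋₊).choose j : ℝ)) := by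
  classical
  have : Nonempty V := by
    obtain ⟨x, hx⟩ := hlam.1.exists_hasEigenvector
    by_contra hV
    have := not_nonempty_iff.1 hV
    exact hx.2 (Subsingleton.elim x 0)
  rw [Set.ncard_setOf_eq_card_filter]
  exact_mod_cast card_le_of_fingerprint
    (G.container ⌊lam / (d + lam) * Fintype.card V⌋₊ ·
      ⌈(Real.log (d + 1) + 1) / (d + lam) * Fintype.card V⌉₊ univ)
    (hreg.card_container_le hd hlam.2) (fun S hS => by simpa using (mem_filter.1 hS).2.2)
    fun S hS => by simpa using G.exists_fingerprint (mem_filter.1 hS).2.1 _ univ
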